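/- arXiv:2210.02888 — 2 statements merged into one kernel-verified Lean document; each statement's English description precedes it below -/
import Mathlib

section
/- The number of connection configurations for fixed r and k is maximized at n = ⌊rk/2⌋: for all n with 0 ≤ n ≤ rk, C(r,k,n) ≤ C(r,k,⌊rk/2⌋). -/
def C (r k n : ℕ) : ℕ :=
  Fintype.card {c : Fin r → Fin (k + 1) // ∑ i, (c i : ℕ) = n}

lemma C_symm (r k n m : ℕ) (h : n + m = r * k) : C r k n = C r k m := by
  have key : ∀ a b : ℕ, a + b = r * k →
      ∀ c : Fin r → Fin (k + 1), ∑ i, (c i : ℕ) = a →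
      ∑ i, ((c i).rev : ℕ) = b := by
    intro a b hab c hc
    have h2 : ∑ i, (((c i).rev : ℕ) + (c i : ℕ)) = r * k := by
      have : ∀ i : Fin r, ((c i).rev : ℕ) + (c i : ℕ) = k := by
        intro i
        have := (c i).is_le
        simp only [Fin.val_rev]
        omega
      rw [Finset.sum_congr rfl (fun i _ => this i)]
      simp [mul_comm]
    rw [Finset.sum_add_distrib, hc] at h2
    omega
  unfold C
  apply Fintype.card_congr
  refine ⟨fun c => ⟨fun i => (c.1 i).rev, key n m h c.1 c.2⟩,
          fun c => ⟨fun i => (c.1 i).rev, key m n (by omega) c.1 c.2⟩, ?_, ?_⟩ <;>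
    · intro c
      ext i
      simp [Fin.rev_rev]

lemma C_succ (r k n : ℕ) :
    C (r + 1) k n = ∑ j ∈ Finset.range (k + 1),
      (if j ≤ n then C r k (n - j) else 0) := by
  have e : {c : Fin (r + 1) → Fin (k + 1) // ∑ i, (c i : ℕ) = n} ≃
      Σ j : Fin (k + 1), {c : Fin r → Fin (k + 1) // (j : ℕ) + ∑ i, (c i : ℕ) = n} := by
    refine ⟨fun c => ⟨c.1 0, fun i => c.1 i.succ, ?_⟩,
            fun p => ⟨Fin.cons p.1 p.2.1, ?_⟩, ?_, ?_⟩
    · rw [← Fin.sum_univ_succ (f := fun i => (c.1 i : ℕ))]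
      exact c.2
    · rw [Fin.sum_univ_succ]
      simpa using p.2.2
    · intro c
      apply Subtype.ext
      exact funext (Fin.cases rfl (fun i => rfl))
    · intro p
      rcases p with ⟨j, c, hc⟩
      rfl
  have h1 : C (r + 1) k n = ∑ j : Fin (k + 1),
      Fintype.card {c : Fin r → Fin (k + 1) // (j : ℕ) + ∑ i, (c i : ℕ) = n} := by
    rw [C, Fintype.card_congr e, Fintype.card_sigma]
  rw [h1, Fin.sum_univ_eq_sum_range
    (fun j => Fintype.card {c : Fin r → Fin (k + 1) // (j : ℕ) + ∑ i, (c i : ℕ) = n})]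
  apply Finset.sum_congr rfl
  intro j hj
  simp only [Finset.mem_range] at hj
  by_cases hjn : j ≤ n
  · rw [if_pos hjn, C]
    apply Fintype.card_congr
    apply Equiv.subtypeEquivRight
    intro c
    clear h1 e
    omega
  · rw [if_neg hjn]
    apply Fintype.card_eq_zero_iff.mpr
    constructor
    intro ⟨c, hc⟩
    clear h1 e
    omega

lemma C_step (k : ℕ) : ∀ r n : ℕ, 2 * (n + 1) ≤ r * k → C r k n ≤ C r k (n + 1) := by
  intro r
  induction r with
  | zero => intro n h; omega
  | succ r ih =>
    -- monotonicity at level r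
    have mono : ∀ i j : ℕ, i ≤ j → 2 * j ≤ r * k → C r k i ≤ C r k j := by
      intro i j hij hj
      induction j with
      | zero => simp_all
      | succ j ihj =>
        rcases Nat.lt_or_ge i (j + 1) with hlt | hge
        · exact le_trans (ihj (by omega) (by omega)) (ih j hj)
        · have : i = j + 1 := by omega
          rw [this]
    have cross : ∀ i j : ℕ, i ≤ j → i + j ≤ r * k → C r k i ≤ C r k j := by
      intro i j hij hsum
      rcases le_or_gt (2 * j) (r * k) with h2 | h2
      · exact mono i j hij h2
      · have hsymm : C r k j = C r k (r * k - j) := C_symm r k j (r * k - j) (by omega)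
        rw [hsymm]
        exact mono i (r * k - j) (by omega) (by omega)
    intro n hn
    rw [C_succ, C_succ]
    rw [Finset.sum_range_succ (f := fun j => if j ≤ n then C r k (n - j) else 0)]
    rw [Finset.sum_range_succ' (f := fun j => if j ≤ n + 1 then C r k (n + 1 - j) else 0)]
    have heq : ∑ j ∈ Finset.range k, (if j ≤ n then C r k (n - j) else 0) =
        ∑ j ∈ Finset.range k, (if j + 1 ≤ n + 1 then C r k (n + 1 - (j + 1)) else 0) := by
      apply Finset.sum_congr rfl
      intro j _
      simp only [Nat.succ_sub_succ, Nat.add_le_add_iff_right]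
    rw [heq]
    simp only [Nat.le_add_left, if_pos, Nat.zero_le, Nat.sub_zero]
    have hrk : (r + 1) * k = r * k + k := by ring
    have hlast : (if k ≤ n then C r k (n - k) else 0) ≤ C r k (n + 1) := by
      by_cases hkn : k ≤ n
      · rw [if_pos hkn]
        exact cross (n - k) (n + 1) (by omega) (by omega)
      · simp [hkn]
    omega

lemma C_mono (r k : ℕ) : ∀ i j : ℕ, i ≤ j → 2 * j ≤ r * k → C r k i ≤ C r k j := by
  intro i j hij hj
  induction j with
  | zero => simp_all
  | succ j ihj =>
    rcases Nat.lt_or_ge i (j + 1) with hlt | hge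
    · exact le_trans (ihj (by omega) (by omega)) (C_step k r j hj)
    · have : i = j + 1 := by omega
      rw [this]

lemma C_cross (r k : ℕ) : ∀ i j : ℕ, i ≤ j → i + j ≤ r * k → C r k i ≤ C r k j := by
  intro i j hij hsum
  rcases le_or_gt (2 * j) (r * k) with h2 | h2
  · exact C_mono r k i j hij h2
  · rw [C_symm r k j (r * k - j) (by omega)]
    exact C_mono r k i (r * k - j) (by omega) (by omega)

theorem stmt8 (r k n : ℕ) (hn : n ≤ r * k) : C r k n ≤ C r k (r * k / 2) := by
  rcases le_or_gt (2 * n) (r * k) with h2 | h2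
  · exact C_cross r k n (r * k / 2) (by omega) (by omega)
  · rw [C_symm r k n (r * k - n) (by omega)]
    exact C_cross r k (r * k - n) (r * k / 2) (by omega) (by omega)
end

section
/- Incompatible nodes property: suppose k > 1 and a node p has r neighbors with magn(p) = (r−1)k + j for some j with 2 ≤ j ≤ k. If p has a neighbor q with magn(q) ≤ j − 1, then the grid is unsolvable. -/
/-! The other `r - 1` neighbours of `p` absorb at most `(r - 1) * k` of its `magn p` connections,
so `q` receives at least `j` of them; but `q` can take at most `magn q ≤ j - 1`. -/

namespace Finset

theorem sum_le_add_card_sub_one_mul {α : Type*} {s : Finset α} {f : α → ℕ} {k : ℕ}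
    (hf : ∀ b ∈ s, f b ≤ k) {a : α} (ha : a ∈ s) :
    ∑ b ∈ s, f b ≤ f a + (#s - 1) * k := by
  classical
  rw [← add_sum_erase s f ha, ← card_erase_of_mem ha, ← smul_eq_mul]
  exact Nat.add_le_add_left (sum_le_card_nsmul _ _ k fun b hb => hf b (mem_of_mem_erase hb)) _

end Finset

section Grid

open Finset

variable {V : Type*} [Fintype V] {Adj : V → V → Prop} [DecidableRel Adj]
  {magn : V → ℕ} {k : ℕ} {c : V → V → ℕ}

/-- `c a b` is the number of connections between the nodes `a` and `b`. -/
structure IsSolution (Adj : V → V → Prop) [DecidableRel Adj] (magn : V → ℕ) (k : ℕ)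
    (c : V → V → ℕ) : Prop where
  symm : ∀ a b, c a b = c b a
  eq_zero_of_not_adj : ∀ a b, ¬ Adj a b → c a b = 0
  le : ∀ a b, c a b ≤ k
  sum_eq : ∀ a, ∑ b ∈ univ.filter (fun b => Adj a b), c a b = magn a

theorem IsSolution.le_magn_right (hc : IsSolution Adj magn k c) (a b : V) : c a b ≤ magn b := by
  rw [hc.symm, ← hc.sum_eq b]
  by_cases hba : Adj b a
  · exact single_le_sum (fun _ _ => Nat.zero_le _) (by simp [hba])
  · simp [hc.eq_zero_of_not_adj b a hba]

theorem IsSolution.magn_le_add {p q : V} (hc : IsSolution Adj magn k c) (hq : Adj p q) :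
    magn p ≤ c p q + (#(univ.filter fun b => Adj p b) - 1) * k := by
  rw [← hc.sum_eq p]
  exact sum_le_add_card_sub_one_mul (fun b _ => hc.le p b) (by simp [hq])

end Grid

open Finset in
theorem stmt14_general {V : Type*} [Fintype V]
    (Adj : V → V → Prop) [DecidableRel Adj] (magn : V → ℕ) (k : ℕ)
    (p : V) (r j : ℕ) (hr : (univ.filter (fun q => Adj p q)).card = r)
    (hj : 2 ≤ j) (hmag : magn p = (r - 1) * k + j)
    (q : V) (hq : Adj p q) (hqm : magn q ≤ j - 1) :
    ¬ ∃ c : V → V → ℕ, (∀ a b, c a b = c b a) ∧ (∀ a b, ¬ Adj a b → c a b = 0) ∧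
      (∀ a b, c a b ≤ k) ∧
      ∀ a, ∑ b ∈ univ.filter (fun b => Adj a b), c a b = magn a := by
  rintro ⟨c, hsymm, hzero, hle, hsum⟩
  have hc : IsSolution Adj magn k c := ⟨hsymm, hzero, hle, hsum⟩
  have hpq : j ≤ c p q := by
    have := hc.magn_le_add hq
    rw [hr, hmag] at this
    omega
  have := hc.le_magn_right p q
  omega

open Finset in
/-- Incompatible nodes property. -/
theorem stmt14 {V : Type*} [Fintype V] [DecidableEq V]
    (Adj : V → V → Prop) [DecidableRel Adj] (magn : V → ℕ) (k : ℕ) (hk : 1 < k)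
    (p : V) (r j : ℕ) (hr : (univ.filter (fun q => Adj p q)).card = r)
    (hj : 2 ≤ j) (hjk : j ≤ k) (hmag : magn p = (r - 1) * k + j)
    (q : V) (hq : Adj p q) (hqm : magn q ≤ j - 1) :
    ¬ ∃ c : V → V → ℕ, (∀ a b, c a b = c b a) ∧ (∀ a b, ¬ Adj a b → c a b = 0) ∧
      (∀ a b, c a b ≤ k) ∧
      ∀ a, ∑ b ∈ univ.filter (fun b => Adj a b), c a b = magn a :=
  stmt14_general Adj magn k p r j hr hj hmag q hq hqm
end
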